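/- arXiv:1302.1489 — 2 statements merged into one kernel-verified Lean document; each statement's English description precedes it below -/
import Mathlib

section
/- For fixed λ ≥ 0 and positive integer K, the function γ ↦ Σ_{n=0}^{∞} ((γ/2)^n e^{-γ/2} / n!) · Γ(n+K, λ/2)/Γ(n+K) is monotonically non-decreasing on [0, ∞). -/
/-!
With `μ = γ / 2` and `cₙ = Γ(n + K, λ/2) / Γ(n + K)`, the function is `E[c_N]` for
`N ~ Poisson(μ)`. Integration by parts gives `Γ(a + 1, x) = xᵃ e⁻ˣ + a Γ(a, x)`, so `cₙ` is
non-decreasing in `n` and lies in `[0, 1]`. For `μ₁ ≤ μ₂`, the product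
`e^(μ₂ - μ₁) ∑ cₙ μ₁ⁿ / n!` is a Cauchy product whose `n`-th antidiagonal sum has all its
coefficients `c_l` with `l ≤ n`, hence is at most `cₙ μ₂ⁿ / n!` by the binomial theorem;
multiplying by `e^(-μ₂)` gives the monotonicity.
-/

/-- The upper incomplete gamma function `Γ(a, x) = ∫_x^∞ t^(a-1) e^{-t} dt`. -/
noncomputable def upperGamma (a x : ℝ) : ℝ := ∫ t in Set.Ioi x, t ^ (a - 1) * Real.exp (-t)

open MeasureTheory Set Real Finset Nat

section upperGamma

variable {a x : ℝ}

lemma upperGamma_integrableOn (ha : 0 < a) (hx : 0 ≤ x) :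
    IntegrableOn (fun t : ℝ => t ^ (a - 1) * exp (-t)) (Ioi x) :=
  ((GammaIntegral_convergent ha).mono_set (Ioi_subset_Ioi hx)).congr_fun
    (fun _ _ => mul_comm _ _) measurableSet_Ioi

lemma upperGamma_nonneg (hx : 0 ≤ x) : 0 ≤ upperGamma a x :=
  setIntegral_nonneg measurableSet_Ioi fun _ ht =>
    mul_nonneg (rpow_nonneg (hx.trans ht.le) _) (exp_nonneg _)

lemma upperGamma_le_Gamma (ha : 0 < a) (hx : 0 ≤ x) : upperGamma a x ≤ Gamma a := by
  rw [Gamma_eq_integral ha, upperGamma]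
  simp_rw [mul_comm (_ ^ _)]
  refine setIntegral_mono_set (GammaIntegral_convergent ha) ?_
    (Ioi_subset_Ioi hx).eventuallyLE
  filter_upwards [ae_restrict_mem measurableSet_Ioi] with t ht
  exact mul_nonneg (exp_nonneg _) (rpow_nonneg ht.le _)

lemma upperGamma_add_one (ha : 0 < a) (hx : 0 ≤ x) :
    upperGamma (a + 1) x = x ^ a * exp (-x) + a * upperGamma a x := by
  have hint₁ : IntegrableOn (fun t : ℝ => t ^ a * exp (-t)) (Ioi x) := by
    simpa using upperGamma_integrableOn (add_pos ha one_pos) hx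
  have hint₂ := (upperGamma_integrableOn ha hx).const_mul a
  have hparts : ∫ t in Ioi x, (t ^ a * exp (-t) - a * (t ^ (a - 1) * exp (-t)))
      = 0 - -(x ^ a * exp (-x)) := by
    refine integral_Ioi_of_hasDerivAt_of_tendsto (f := fun t => -(t ^ a * exp (-t)))
      ?_ (fun t ht => ?_) (hint₁.sub hint₂) ?_
    · exact ((continuousAt_rpow_const x a (Or.inr ha.le)).mul
        (continuous_exp.comp continuous_neg).continuousAt).continuousWithinAt.neg
    · have hpow := hasDerivAt_rpow_const (p := a) (Or.inl (hx.trans_lt ht).ne')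
      convert (hpow.mul (hasDerivAt_neg t).exp).neg using 1
      · rfl
      · ring
    · simpa using (tendsto_rpow_mul_exp_neg_mul_atTop_nhds_zero a 1 one_pos).neg
  rw [integral_sub hint₁ hint₂, integral_const_mul] at hparts
  simp only [upperGamma, add_sub_cancel_right]
  linarith

end upperGamma

noncomputable def regularizedUpperGamma (a x : ℝ) : ℝ := upperGamma a x / Gamma a

section regularizedUpperGamma

variable {a x : ℝ}

lemma regularizedUpperGamma_nonneg (ha : 0 < a) (hx : 0 ≤ x) : 0 ≤ regularizedUpperGamma a x :=
  div_nonneg (upperGamma_nonneg hx) (Gamma_pos_of_pos ha).le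

lemma regularizedUpperGamma_le_one (ha : 0 < a) (hx : 0 ≤ x) : regularizedUpperGamma a x ≤ 1 :=
  div_le_one_of_le₀ (upperGamma_le_Gamma ha hx) (Gamma_pos_of_pos ha).le

lemma abs_regularizedUpperGamma_le_one (ha : 0 < a) (hx : 0 ≤ x) :
    |regularizedUpperGamma a x| ≤ 1 := by
  rw [abs_of_nonneg (regularizedUpperGamma_nonneg ha hx)]
  exact regularizedUpperGamma_le_one ha hx

lemma regularizedUpperGamma_le_add_one (ha : 0 < a) (hx : 0 ≤ x) :
    regularizedUpperGamma a x ≤ regularizedUpperGamma (a + 1) x := by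
  have hrec : regularizedUpperGamma (a + 1) x
      = regularizedUpperGamma a x + x ^ a * exp (-x) / (a * Gamma a) := by
    rw [regularizedUpperGamma, regularizedUpperGamma, upperGamma_add_one ha hx,
      Gamma_add_one ha.ne']
    field_simp
    ring
  rw [hrec]
  exact le_add_of_nonneg_right (by positivity)

lemma monotone_regularizedUpperGamma_nat_add (ha : 0 < a) (hx : 0 ≤ x) :
    Monotone fun n : ℕ => regularizedUpperGamma (n + a) x := by
  refine monotone_nat_of_le_succ fun n => ?_
  rw [Nat.cast_succ, add_right_comm]
  exact regularizedUpperGamma_le_add_one (by positivity) hx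

end regularizedUpperGamma

section PoissonMixture

variable {c : ℕ → ℝ}

lemma sum_antidiagonal_pow_div_factorial_mul (x y : ℝ) (n : ℕ) :
    ∑ kl ∈ antidiagonal n, x ^ kl.1 / kl.1 ! * (y ^ kl.2 / kl.2 !) = (x + y) ^ n / n ! := by
  rw [(Commute.all x y).add_pow', Finset.sum_div]
  refine Finset.sum_congr rfl fun kl hkl => ?_
  rw [← HasAntidiagonal.mem_antidiagonal.mp hkl, nsmul_eq_mul, Nat.cast_add_choose]
  field_simp

lemma summable_norm_mul_pow_div_factorial {C : ℝ} (hc : ∀ n, |c n| ≤ C) (x : ℝ) :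
    Summable fun n => ‖c n * x ^ n / (n ! : ℝ)‖ := by
  refine .of_nonneg_of_le (fun _ => norm_nonneg _) (fun n => ?_)
    ((summable_pow_div_factorial |x|).mul_left C)
  rw [norm_div, norm_mul, norm_pow, Real.norm_natCast, mul_div_assoc]
  exact mul_le_mul (hc n) le_rfl (by positivity) ((abs_nonneg _).trans (hc n))

lemma sum_antidiagonal_le_of_monotone (hc : Monotone c) {x y : ℝ} (hx : 0 ≤ x) (hy : 0 ≤ y)
    (n : ℕ) :
    ∑ kl ∈ antidiagonal n, x ^ kl.1 / kl.1 ! * (c kl.2 * y ^ kl.2 / kl.2 !)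
      ≤ c n * (x + y) ^ n / n ! := by
  rw [mul_div_assoc, ← sum_antidiagonal_pow_div_factorial_mul, Finset.mul_sum]
  refine Finset.sum_le_sum fun kl hkl => ?_
  have hle : c kl.2 ≤ c n := hc (HasAntidiagonal.antidiagonal.snd_le hkl)
  calc x ^ kl.1 / kl.1 ! * (c kl.2 * y ^ kl.2 / kl.2 !)
      = c kl.2 * (x ^ kl.1 / kl.1 ! * (y ^ kl.2 / kl.2 !)) := by ring
    _ ≤ c n * (x ^ kl.1 / kl.1 ! * (y ^ kl.2 / kl.2 !)) :=
      mul_le_mul_of_nonneg_right hle (by positivity)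

lemma exp_mul_tsum_le_of_monotone (hc : Monotone c) {C : ℝ} (hC : ∀ n, |c n| ≤ C) {x y : ℝ}
    (hx : 0 ≤ x) (hy : 0 ≤ y) :
    exp x * ∑' n, c n * y ^ n / n ! ≤ ∑' n, c n * (x + y) ^ n / n ! := by
  have hexp : Summable fun n => ‖x ^ n / (n ! : ℝ)‖ := by
    simpa using summable_norm_mul_pow_div_factorial (c := 1) (fun _ => abs_one.le) x
  have hser := summable_norm_mul_pow_div_factorial hC y
  rw [exp_eq_exp_ℝ, NormedSpace.exp_eq_tsum_div,
    tsum_mul_tsum_eq_tsum_sum_antidiagonal_of_summable_norm hexp hser]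
  exact Summable.tsum_le_tsum (sum_antidiagonal_le_of_monotone hc hx hy)
    (summable_norm_sum_mul_antidiagonal_of_summable_norm hexp hser).of_norm
    (summable_norm_mul_pow_div_factorial hC _).of_norm

lemma monotoneOn_tsum_poisson_mul (hc : Monotone c) {C : ℝ} (hC : ∀ n, |c n| ≤ C) :
    MonotoneOn (fun μ : ℝ => ∑' n : ℕ, (μ ^ n * exp (-μ) / n !) * c n) (Ici 0) := by
  have hfactor (μ : ℝ) : ∑' n : ℕ, (μ ^ n * exp (-μ) / n !) * c n
      = exp (-μ) * ∑' n, c n * μ ^ n / n ! := by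
    rw [← tsum_mul_left]
    exact tsum_congr fun n => by ring
  intro μ₁ hμ₁ μ₂ _ hle
  simp only [hfactor]
  calc exp (-μ₁) * ∑' n, c n * μ₁ ^ n / n !
      = exp (-μ₂) * (exp (μ₂ - μ₁) * ∑' n, c n * μ₁ ^ n / n !) := by
        rw [← mul_assoc, ← exp_add]
        ring_nf
    _ ≤ exp (-μ₂) * ∑' n, c n * (μ₂ - μ₁ + μ₁) ^ n / n ! :=
        mul_le_mul_of_nonneg_left
          (exp_mul_tsum_le_of_monotone hc hC (sub_nonneg.mpr hle) hμ₁) (exp_nonneg _)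
    _ = exp (-μ₂) * ∑' n, c n * μ₂ ^ n / n ! := by rw [sub_add_cancel]

end PoissonMixture

/-- The series form of the generalized Marcum Q-function `Q_K(√γ, √λ)` is
monotonically non-decreasing in the SNR `γ` on `[0, ∞)`. -/
theorem stmt9 (lam : ℝ) (hlam : 0 ≤ lam) (K : ℕ) (hK : 0 < K) :
    MonotoneOn
      (fun γ : ℝ => ∑' n : ℕ,
        ((γ / 2) ^ n * Real.exp (-(γ / 2)) / n.factorial) *
          (upperGamma (n + K) (lam / 2) / Real.Gamma (n + K)))
      (Set.Ici 0) := by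
  have hK' : (0 : ℝ) < K := Nat.cast_pos.mpr hK
  have hx : 0 ≤ lam / 2 := div_nonneg hlam zero_le_two
  have hpoisson := monotoneOn_tsum_poisson_mul (monotone_regularizedUpperGamma_nat_add hK' hx)
    fun n => abs_regularizedUpperGamma_le_one (by positivity) hx
  exact hpoisson.comp (fun _ _ _ _ h => div_le_div_of_nonneg_right h zero_le_two)
    fun _ hγ => Set.mem_Ici.mpr (div_nonneg hγ zero_le_two)
end

section
/- For fixed positive parameters x, η, θ, ψ, the function F(P) = √(2xη/π) e^{η/θ} Σ_{n=0}^{P-1} ((ψ/2)^n / n!) (√(x²ηθ²/(xψθ² + η)))^{n-1/2} K_{n-1/2}(√(η(xψθ² + η))/θ) is bounded above by 1 for all P, i.e., the partial sums of the series Λ (with the regularized incomplete gamma factors replaced by 1) never exceed 1. -/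
open Real MeasureTheory Set


/-- The modified Bessel function of the second kind,
`K_ν(z) = ∫_0^∞ e^{-z cosh t} cosh(ν t) dt` (valid for `z > 0`). -/
noncomputable def besselK (ν z : ℝ) : ℝ :=
  ∫ t in Set.Ioi (0 : ℝ), Real.exp (-z * Real.cosh t) * Real.cosh (ν * t)

lemma quad_le_cosh (u : ℝ) : u ^ 2 / 8 ≤ Real.cosh u := by
  have h2 : Real.exp |u| / 2 ≤ Real.cosh u := by
    rw [Real.cosh_eq]
    rcases abs_cases u with ⟨h, _⟩ | ⟨h, _⟩ <;> rw [h] <;>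
      [nlinarith [Real.exp_pos (-u)]; nlinarith [Real.exp_pos u]]
  have h3 : (1 + |u| / 2) ^ 2 ≤ Real.exp |u| := by
    have := Real.add_one_le_exp (|u| / 2)
    have e2 : Real.exp |u| = Real.exp (|u| / 2) ^ 2 := by
      rw [← Real.exp_nat_mul]; ring_nf
    nlinarith [Real.exp_pos (|u| / 2), abs_nonneg u]
  have h4 : u ^ 2 = |u| ^ 2 := (sq_abs u).symm
  nlinarith [abs_nonneg u]

lemma integrable_exp_nu_cosh (ν z : ℝ) (hz : 0 < z) :
    Integrable (fun u : ℝ => Real.exp (ν * u - z * Real.cosh u)) := by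
  have hbound : ∀ u : ℝ, Real.exp (ν * u - z * Real.cosh u)
      ≤ Real.exp (4 * ν ^ 2 / z) * Real.exp (-(z / 16) * u ^ 2) := by
    intro u
    rw [← Real.exp_add]
    apply Real.exp_le_exp.2
    have h1 := quad_le_cosh u
    have := mul_le_mul_of_nonneg_left h1 hz.le
    have hd : 4 * ν ^ 2 / z * z = 4 * ν ^ 2 := div_mul_cancel₀ _ hz.ne'
    nlinarith [sq_nonneg (u * z / 4 - 2 * ν), hd, hz, sq_nonneg u]
  refine (Integrable.const_mul (integrable_exp_neg_mul_sq (by positivity : (0:ℝ) < z/16)) (Real.exp (4*ν^2/z))).mono'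
    ((Continuous.rexp (by continuity)).aestronglyMeasurable) ?_
  filter_upwards with u
  rw [Real.norm_eq_abs, abs_of_pos (Real.exp_pos _)]
  exact hbound u

lemma cosh_mul_exp_eq (ν z t : ℝ) : Real.exp (-z * Real.cosh t) * Real.cosh (ν * t)
    = (Real.exp (ν * t - z * Real.cosh t) + Real.exp (-(ν * t) - z * Real.cosh t)) / 2 := by
  rw [Real.cosh_eq (ν * t), Real.exp_sub, Real.exp_sub, neg_mul, Real.exp_neg]
  have h := Real.exp_ne_zero (z * Real.cosh t)
  field_simp

lemma besselK_integrableOn (ν z : ℝ) (hz : 0 < z) :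
    IntegrableOn (fun t : ℝ => Real.exp (-z * Real.cosh t) * Real.cosh (ν * t)) (Ioi 0) := by
  have h1 := (integrable_exp_nu_cosh ν z hz).integrableOn (s := Ioi 0)
  have h2 := (integrable_exp_nu_cosh (-ν) z hz).integrableOn (s := Ioi 0)
  exact IntegrableOn.congr_fun ((h1.add h2).div_const 2)
    (fun t _ => by rw [Pi.add_apply, neg_mul ν t]; exact (cosh_mul_exp_eq ν z t).symm) measurableSet_Ioi

lemma integral_exp_nu_cosh (ν z : ℝ) (hz : 0 < z) :
    ∫ u : ℝ, Real.exp (ν * u - z * Real.cosh u) = 2 * besselK ν z := by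
  have hint := integrable_exp_nu_cosh ν z hz
  have hint' := integrable_exp_nu_cosh (-ν) z hz
  rw [← intervalIntegral.integral_Iic_add_Ioi (b := (0:ℝ)) hint.integrableOn hint.integrableOn]
  have hneg : (∫ u in Iic (0:ℝ), Real.exp (ν * u - z * Real.cosh u))
      = ∫ u in Ioi (0:ℝ), Real.exp (-ν * u - z * Real.cosh u) := by
    have h := integral_comp_neg_Ioi (0:ℝ) (fun u => Real.exp (ν * u - z * Real.cosh u))
    rw [neg_zero] at h
    rw [← h]
    refine setIntegral_congr_fun measurableSet_Ioi fun u _ => ?_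
    rw [Real.cosh_neg]
    ring_nf
  rw [hneg, ← integral_add hint'.integrableOn hint.integrableOn, besselK, ← MeasureTheory.integral_const_mul]
  refine setIntegral_congr_fun measurableSet_Ioi fun t _ => ?_
  rw [cosh_mul_exp_eq, neg_mul]
  ring

lemma image_exp_univ (s : ℝ) (hs : 0 < s) :
    (fun u : ℝ => s * Real.exp u) '' univ = Ioi 0 := by
  ext γ
  simp only [image_univ, mem_range, mem_Ioi]
  constructor
  · rintro ⟨u, rfl⟩; positivity
  · intro hγ
    exact ⟨Real.log (γ / s), by rw [Real.exp_log (by positivity)]; field_simp⟩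

lemma master (ν a b : ℝ) (ha : 0 < a) (hb : 0 < b) :
    IntegrableOn (fun γ : ℝ => γ ^ (ν - 1) * Real.exp (-(a * γ) - b / γ)) (Ioi 0) ∧
    (∫ γ in Ioi 0, γ ^ (ν - 1) * Real.exp (-(a * γ) - b / γ))
      = 2 * Real.sqrt (b / a) ^ ν * besselK ν (2 * Real.sqrt (a * b)) := by
  set s := Real.sqrt (b / a) with hsdef
  set z := 2 * Real.sqrt (a * b) with hzdef
  have hs : 0 < s := Real.sqrt_pos.2 (by positivity)
  have hz : 0 < z := by positivity
  have has : a * s = z / 2 := by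
    rw [hsdef, hzdef, show 2 * Real.sqrt (a * b) / 2 = Real.sqrt (a * b) by ring,
      show a * b = a ^ 2 * (b / a) by field_simp,
      Real.sqrt_mul (sq_nonneg a), Real.sqrt_sq ha.le]
  have hb2 : s * (z / 2) = b := by
    rw [hsdef, hzdef, show 2 * Real.sqrt (a * b) / 2 = Real.sqrt (a * b) by ring,
      ← Real.sqrt_mul (by positivity : (0:ℝ) ≤ b / a),
      show b / a * (a * b) = b ^ 2 by field_simp, Real.sqrt_sq hb.le]
  have hbs : b / s = z / 2 := by
    rw [← hb2, mul_div_cancel_left₀ _ hs.ne']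
  have key : ∀ u : ℝ, |s * Real.exp u| •
      ((fun γ : ℝ => γ ^ (ν - 1) * Real.exp (-(a * γ) - b / γ)) (s * Real.exp u))
      = s ^ ν * Real.exp (ν * u - z * Real.cosh u) := by
    intro u
    have hw : 0 < s * Real.exp u := by positivity
    rw [smul_eq_mul, abs_of_pos hw, ← mul_assoc,
      mul_comm (s * Real.exp u) ((s * Real.exp u) ^ (ν - 1)),
      ← Real.rpow_add_one hw.ne' (ν - 1)]
    have e1 : (s * Real.exp u) ^ (ν - 1 + 1) = s ^ ν * Real.exp (ν * u) := by
      rw [sub_add_cancel, Real.mul_rpow hs.le (Real.exp_pos u).le,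
        Real.rpow_def_of_pos (Real.exp_pos u), Real.log_exp]
      ring_nf
    have e2 : -(a * (s * Real.exp u)) - b / (s * Real.exp u)
        = (ν * u - z * Real.cosh u) - ν * u := by
      have hbe : b / (s * Real.exp u) = b / s * Real.exp (-u) := by
        rw [Real.exp_neg]; field_simp
      rw [Real.cosh_eq, hbe, hbs,
        show -(a * (s * Real.exp u)) = -(a * s * Real.exp u) by ring, has]
      ring
    rw [e1, e2, Real.exp_sub]
    field_simp
  have himg := image_exp_univ s hs
  have hderiv : ∀ u ∈ (univ : Set ℝ), HasDerivWithinAt (fun u : ℝ => s * Real.exp u)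
      (s * Real.exp u) univ u :=
    fun u _ => ((Real.hasDerivAt_exp u).const_mul s).hasDerivWithinAt
  have hinj : InjOn (fun u : ℝ => s * Real.exp u) univ := fun u _ v _ h =>
    Real.exp_injective (mul_left_cancel₀ hs.ne' h)
  constructor
  · rw [← himg, integrableOn_image_iff_integrableOn_abs_deriv_smul MeasurableSet.univ
      hderiv hinj]
    rw [integrableOn_univ]
    exact (Integrable.congr ((integrable_exp_nu_cosh ν z hz).const_mul (s ^ ν))
      (Filter.Eventually.of_forall fun u => (key u).symm))
  · rw [← himg, integral_image_eq_integral_abs_deriv_smul MeasurableSet.univ hderiv hinj]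
    rw [Measure.restrict_univ]
    simp_rw [key]
    rw [MeasureTheory.integral_const_mul, integral_exp_nu_cosh ν z hz]
    ring

lemma sinh_pos' {t : ℝ} (ht : 0 < t) : 0 < Real.sinh t := by
  rw [← Real.sinh_zero]; exact Real.sinh_lt_sinh.2 ht

lemma besselK_neg_half (z : ℝ) (hz : 0 < z) :
    besselK (-(1 / 2)) z = Real.sqrt (Real.pi / (2 * z)) * Real.exp (-z) := by
  have himg : (fun t : ℝ => Real.sinh (t / 2)) '' Ioi 0 = Ioi 0 := by
    ext w; simp only [mem_image, mem_Ioi]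
    constructor
    · rintro ⟨t, ht, rfl⟩; exact sinh_pos' (by linarith)
    · intro hw
      refine ⟨2 * Real.arsinh w, by simpa using Real.arsinh_pos_iff.2 hw, ?_⟩
      rw [show (2:ℝ) * Real.arsinh w / 2 = Real.arsinh w by ring, Real.sinh_arsinh]
  have hderiv : ∀ t ∈ Ioi (0:ℝ), HasDerivWithinAt (fun t : ℝ => Real.sinh (t / 2))
      (Real.cosh (t / 2) * (1 / 2)) (Ioi 0) t := fun t _ =>
    (((hasDerivAt_id t).div_const 2).sinh).hasDerivWithinAt
  have hinj : InjOn (fun t : ℝ => Real.sinh (t / 2)) (Ioi 0) := fun t _ u _ h => by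
    have := Real.sinh_injective h
    linarith
  have hsub := integral_image_eq_integral_abs_deriv_smul measurableSet_Ioi hderiv hinj
    (fun w => 2 * Real.exp (-z) * Real.exp (-(2 * z) * w ^ 2))
  rw [himg] at hsub
  have hL : (∫ w in Ioi (0:ℝ), 2 * Real.exp (-z) * Real.exp (-(2 * z) * w ^ 2))
      = Real.sqrt (Real.pi / (2 * z)) * Real.exp (-z) := by
    rw [MeasureTheory.integral_const_mul, integral_gaussian_Ioi (2 * z)]
    ring
  rw [besselK, ← hL, hsub]
  refine setIntegral_congr_fun measurableSet_Ioi fun t _ => ?_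
  have hcosh : Real.cosh t = 1 + 2 * Real.sinh (t / 2) ^ 2 := by
    have h2 : t = 2 * (t / 2) := by ring
    rw [h2, Real.cosh_two_mul, Real.cosh_sq]
    ring_nf
  rw [smul_eq_mul, abs_of_pos (by positivity : (0:ℝ) < Real.cosh (t / 2) * (1 / 2)),
    show -(1 / 2) * t = -(t / 2) by ring, Real.cosh_neg, hcosh,
    show -z * (1 + 2 * Real.sinh (t / 2) ^ 2) = -z + -(2 * z) * Real.sinh (t / 2) ^ 2 by ring,
    Real.exp_add]
  ring

/-- Remark 4: every partial sum of the `Λ` series with the regularized incomplete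
gamma factors replaced by `1` is bounded above by `1`. -/
theorem stmt19 (x η θ ψ : ℝ) (hx : 0 < x) (hη : 0 < η) (hθ : 0 < θ) (hψ : 0 < ψ) :
    ∀ P : ℕ,
      Real.sqrt (2 * x * η / Real.pi) * Real.exp (η / θ) *
          ∑ n ∈ Finset.range P,
            ((ψ / 2) ^ n / n.factorial) *
              (Real.sqrt (x ^ 2 * η * θ ^ 2 / (x * ψ * θ ^ 2 + η))) ^ ((n : ℝ) - 1 / 2) *
              besselK ((n : ℝ) - 1 / 2) (Real.sqrt (η * (x * ψ * θ ^ 2 + η)) / θ)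
        ≤ 1 := by
  intro P
  have hπ := Real.pi_pos
  set c := x * ψ * θ ^ 2 + η with hc
  have hcpos : 0 < c := by positivity
  set A := c / (2 * x * θ ^ 2) with hA
  set a0 := η / (2 * x * θ ^ 2) with ha0
  set b := η * x / 2 with hb
  have hApos : 0 < A := by positivity
  have ha0pos : 0 < a0 := by positivity
  have hbpos : 0 < b := by positivity
  -- identify sqrt arguments
  have hsqrtBA : Real.sqrt (b / A) = Real.sqrt (x ^ 2 * η * θ ^ 2 / c) := by
    congr 1
    rw [hb, hA]
    field_simp
  have hzarg : 2 * Real.sqrt (A * b) = Real.sqrt (η * c) / θ := by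
    rw [show A * b = η * c * ((2 * θ)⁻¹) ^ 2 by rw [hA, hb]; field_simp,
      Real.sqrt_mul (by positivity), Real.sqrt_sq (by positivity)]
    field_simp
  -- each term as an integral
  have hterm : ∀ n : ℕ,
      ((ψ / 2) ^ n / n.factorial) *
          (Real.sqrt (x ^ 2 * η * θ ^ 2 / c)) ^ ((n : ℝ) - 1 / 2) *
          besselK ((n : ℝ) - 1 / 2) (Real.sqrt (η * c) / θ)
        = ∫ γ in Ioi (0:ℝ), ((ψ / 2) ^ n / n.factorial / 2) *
            (γ ^ ((n : ℝ) - 1 / 2 - 1) * Real.exp (-(A * γ) - b / γ)) := by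
    intro n
    rw [MeasureTheory.integral_const_mul, (master ((n : ℝ) - 1 / 2) A b hApos hbpos).2,
      hsqrtBA, hzarg]
    ring
  rw [Finset.sum_congr rfl fun n _ => hterm n,
    ← MeasureTheory.integral_finset_sum (μ := volume.restrict (Ioi 0)) (Finset.range P)
      (f := fun (n : ℕ) (γ : ℝ) => ((ψ / 2) ^ n / n.factorial / 2) *
        (γ ^ ((n : ℝ) - 1 / 2 - 1) * Real.exp (-(A * γ) - b / γ)))
      (fun n _ => ((master ((n : ℝ) - 1 / 2) A b hApos hbpos).1.const_mul _))]
  -- bound the integral by the Wald normalization integral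
  have hmono : (∫ γ in Ioi (0:ℝ), ∑ n ∈ Finset.range P, ((ψ / 2) ^ n / n.factorial / 2) *
        (γ ^ ((n : ℝ) - 1 / 2 - 1) * Real.exp (-(A * γ) - b / γ)))
      ≤ ∫ γ in Ioi (0:ℝ), (1 / 2) *
        (γ ^ (-(1 / 2 : ℝ) - 1) * Real.exp (-(a0 * γ) - b / γ)) := by
    refine setIntegral_mono_on
      (MeasureTheory.integrable_finset_sum _
        (fun n _ => ((master ((n : ℝ) - 1 / 2) A b hApos hbpos).1.const_mul _)))
      ((master (-(1 / 2)) a0 b ha0pos hbpos).1.const_mul _) measurableSet_Ioi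
      (fun γ hγ => ?_)
    rw [mem_Ioi] at hγ
    have hexp : ∀ n : ℕ, γ ^ ((n : ℝ) - 1 / 2 - 1) * Real.exp (-(A * γ) - b / γ)
        = (γ ^ n * Real.exp (-(ψ / 2 * γ))) *
          (γ ^ (-(1 / 2 : ℝ) - 1) * Real.exp (-(a0 * γ) - b / γ)) := by
      intro n
      have h1 : ((n : ℝ) - 1 / 2 - 1) = (n : ℝ) + (-(1 / 2 : ℝ) - 1) := by ring
      have h2 : -(A * γ) - b / γ = (-(a0 * γ) - b / γ) + (-(ψ / 2 * γ)) := by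
        rw [hA, ha0]
        field_simp
        ring
      rw [h1, Real.rpow_add hγ, Real.rpow_natCast, h2, Real.exp_add]
      ring
    calc ∑ n ∈ Finset.range P, ((ψ / 2) ^ n / n.factorial / 2) *
          (γ ^ ((n : ℝ) - 1 / 2 - 1) * Real.exp (-(A * γ) - b / γ))
        = (Real.exp (-(ψ / 2 * γ)) * ∑ n ∈ Finset.range P, (ψ / 2 * γ) ^ n / n.factorial) *
          ((1 / 2) * (γ ^ (-(1 / 2 : ℝ) - 1) * Real.exp (-(a0 * γ) - b / γ))) := by
          rw [show (Real.exp (-(ψ / 2 * γ)) * ∑ n ∈ Finset.range P, (ψ / 2 * γ) ^ n / n.factorial) *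
              ((1 / 2) * (γ ^ (-(1 / 2 : ℝ) - 1) * Real.exp (-(a0 * γ) - b / γ)))
            = ∑ n ∈ Finset.range P, ((ψ / 2 * γ) ^ n / n.factorial) *
              (Real.exp (-(ψ / 2 * γ)) * ((1 / 2) * (γ ^ (-(1 / 2 : ℝ) - 1) *
                Real.exp (-(a0 * γ) - b / γ)))) by rw [← Finset.sum_mul]; ring]
          refine Finset.sum_congr rfl fun n _ => ?_
          rw [hexp n, mul_pow]
          ring
      _ ≤ 1 * ((1 / 2) * (γ ^ (-(1 / 2 : ℝ) - 1) * Real.exp (-(a0 * γ) - b / γ))) := by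
          refine mul_le_mul_of_nonneg_right ?_ (by positivity)
          have hs := Real.sum_le_exp_of_nonneg (by positivity : (0:ℝ) ≤ ψ / 2 * γ) P
          calc Real.exp (-(ψ / 2 * γ)) * ∑ n ∈ Finset.range P, (ψ / 2 * γ) ^ n / n.factorial
              ≤ Real.exp (-(ψ / 2 * γ)) * Real.exp (ψ / 2 * γ) :=
                mul_le_mul_of_nonneg_left hs (Real.exp_pos _).le
            _ = 1 := by rw [← Real.exp_add]; simp
      _ = (1 / 2) * (γ ^ (-(1 / 2 : ℝ) - 1) * Real.exp (-(a0 * γ) - b / γ)) := one_mul _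
  refine le_trans (mul_le_mul_of_nonneg_left hmono (by positivity)) (le_of_eq ?_)
  have hb_a0 : Real.sqrt (b / a0) = x * θ := by
    rw [show b / a0 = (x * θ) ^ 2 by rw [hb, ha0]; field_simp,
      Real.sqrt_sq (by positivity)]
  have hz0 : 2 * Real.sqrt (a0 * b) = η / θ := by
    rw [show a0 * b = (η / (2 * θ)) ^ 2 by rw [ha0, hb]; field_simp,
      Real.sqrt_sq (by positivity)]
    field_simp
  rw [MeasureTheory.integral_const_mul, (master (-(1 / 2)) a0 b ha0pos hbpos).2, hb_a0, hz0,
    besselK_neg_half _ (by positivity), Real.rpow_neg (by positivity), ← Real.sqrt_eq_rpow,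
    show Real.pi / (2 * (η / θ)) = Real.pi * θ / (2 * η) by field_simp]
  have hmul : Real.sqrt (2 * x * η / Real.pi) * Real.sqrt (Real.pi * θ / (2 * η))
      = Real.sqrt (x * θ) := by
    rw [← Real.sqrt_mul (by positivity),
      show 2 * x * η / Real.pi * (Real.pi * θ / (2 * η)) = x * θ by field_simp]
  have hexp1 : Real.exp (η / θ) * Real.exp (-(η / θ)) = 1 := by
    rw [← Real.exp_add]; simp
  calc Real.sqrt (2 * x * η / Real.pi) * Real.exp (η / θ) *
        (1 / 2 * (2 * (Real.sqrt (x * θ))⁻¹ *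
          (Real.sqrt (Real.pi * θ / (2 * η)) * Real.exp (-(η / θ)))))
      = (Real.sqrt (2 * x * η / Real.pi) * Real.sqrt (Real.pi * θ / (2 * η))) *
        (Real.exp (η / θ) * Real.exp (-(η / θ))) * (Real.sqrt (x * θ))⁻¹ := by ring
    _ = Real.sqrt (x * θ) * 1 * (Real.sqrt (x * θ))⁻¹ := by rw [hmul, hexp1]
    _ = 1 := by
        rw [mul_one]
        exact mul_inv_cancel₀ (ne_of_gt (Real.sqrt_pos.2 (by positivity)))
end
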